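/- Let p₁ ≤ ⋯ ≤ p_s be primes with p_s odd and r ≥ 1. Suppose that for a non-square integer d > 1 and an integer l ≥ 1 one has X_l = p₁^{n_{11}}⋯p_s^{n_{1s}} + ⋯ + p₁^{n_{r1}}⋯p_s^{n_{rs}} with non-negative integer exponents n_{ij}, where n_{rs} = max_{i,j} n_{ij}. If moreover min{γ, n_{rs}} ≥ 2.5·r·p_s, then l < s·n_{rs}. -/
import Mathlib
set_option maxHeartbeats 1000000


/-- If `X_l` is a sum of `r` positive `S`-units built from primes `p₁ ≤ ⋯ ≤ p_s` (`p_s`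
odd) with maximal exponent `n_rs`, and `min {γ, n_rs} ≥ 2.5·r·p_s`, then `l < s·n_rs`. -/
theorem stmt_10
    (d : ℤ) (hd : 1 < d) (hd' : ¬ IsSquare d)
    (X₁ Y₁ : ℤ) (hX₁ : 0 < X₁) (hY₁ : 0 < Y₁)
    (hPell : X₁ ^ 2 - d * Y₁ ^ 2 = 1)
    (hfund : ∀ x y : ℤ, 0 < x → 0 < y → x ^ 2 - d * y ^ 2 = 1 → X₁ ≤ x)
    (γ : ℝ) (hγ : γ = (X₁ : ℝ) + (Y₁ : ℝ) * Real.sqrt (d : ℝ))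
    (X : ℕ → ℤ) (hX : ∀ l : ℕ, 1 ≤ l → (X l : ℝ) = (γ ^ l + γ⁻¹ ^ l) / 2)
    (s r : ℕ) (hs : 0 < s) (hr : 0 < r)
    (p : Fin s → ℕ) (hp : ∀ j, (p j).Prime) (hmono : Monotone p)
    (hodd : Odd (p ⟨s - 1, by omega⟩))
    (n : Fin r → Fin s → ℕ)
    (l : ℕ) (hl : 1 ≤ l)
    (hsum : X l = ∑ i, ∏ j, (p j : ℤ) ^ n i j)
    (hmax : ∀ i j, n i j ≤ n ⟨r - 1, by omega⟩ ⟨s - 1, by omega⟩)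
    (hmin : min γ ((n ⟨r - 1, by omega⟩ ⟨s - 1, by omega⟩ : ℕ) : ℝ) ≥
      2.5 * (r : ℝ) * (p ⟨s - 1, by omega⟩ : ℝ)) :
    l < s * n ⟨r - 1, by omega⟩ ⟨s - 1, by omega⟩ := by
  by_contra hcon
  push_neg at hcon
  obtain ⟨P, hPdef⟩ : ∃ P : ℕ, p ⟨s - 1, by omega⟩ = P := ⟨_, rfl⟩
  obtain ⟨N, hNdef⟩ : ∃ N : ℕ, n ⟨r - 1, by omega⟩ ⟨s - 1, by omega⟩ = N := ⟨_, rfl⟩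
  rw [hPdef] at hodd hmin
  rw [hNdef] at hmin hmax hcon
  -- P is an odd prime, so P ≥ 3
  have hP3 : 3 ≤ P := by
    have h1 := (hp ⟨s - 1, by omega⟩).two_le
    rw [hPdef] at h1
    have h2 := Nat.odd_iff.mp hodd
    omega
  have hr1 : (1 : ℝ) ≤ r := by exact_mod_cast hr
  have hP3' : (3 : ℝ) ≤ P := by exact_mod_cast hP3
  have hbound : (7.5 : ℝ) ≤ 2.5 * r * P := by nlinarith
  have hγb : 2.5 * (r : ℝ) * P ≤ γ := le_trans hmin (min_le_left _ _)
  have hNb : 2.5 * (r : ℝ) * P ≤ (N : ℝ) := le_trans hmin (min_le_right _ _)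
  have hγ1 : (1 : ℝ) ≤ γ := by linarith
  have hγpos : (0 : ℝ) < γ := by linarith
  have hN8 : 8 ≤ N := by
    have h7 : (7 : ℝ) < (N : ℝ) := by linarith
    exact_mod_cast h7
  have hsN8 : 8 ≤ s * N := le_trans hN8 (Nat.le_mul_of_pos_left _ hs)
  -- integer upper bound on X l
  have hXub : (X l : ℤ) ≤ (r : ℤ) * (P : ℤ) ^ (s * N) := by
    rw [hsum]
    calc ∑ i, ∏ j, (p j : ℤ) ^ n i j
        ≤ ∑ _i : Fin r, (P : ℤ) ^ (s * N) := by
          apply Finset.sum_le_sum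
          intro i _
          calc ∏ j, (p j : ℤ) ^ n i j
              ≤ ∏ _j : Fin s, (P : ℤ) ^ N := by
                apply Finset.prod_le_prod
                · intro j _; positivity
                · intro j _
                  have hjle : (p j : ℤ) ≤ (P : ℤ) := by
                    have : p j ≤ P := by
                      rw [← hPdef]
                      apply hmono
                      rw [Fin.le_def]
                      have := j.isLt
                      simp only []
                      omega
                    exact_mod_cast this
                  have hpj0 : (0 : ℤ) ≤ (p j : ℤ) := by positivity
                  calc (p j : ℤ) ^ n i j ≤ (P : ℤ) ^ n i j :=
                        pow_le_pow_left₀ hpj0 hjle _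
                    _ ≤ (P : ℤ) ^ N := by
                        apply pow_le_pow_right₀ _ (hmax i j)
                        exact_mod_cast le_trans (by norm_num) hP3
            _ = (P : ℤ) ^ (s * N) := by
                rw [Finset.prod_const, Finset.card_univ, Fintype.card_fin, ← pow_mul,
                  mul_comm N s]
      _ = (r : ℤ) * (P : ℤ) ^ (s * N) := by
          rw [Finset.sum_const, Finset.card_univ, Fintype.card_fin, nsmul_eq_mul]
  -- real lower bound: γ^l ≤ 2 X l
  have hXl : γ ^ l ≤ 2 * (X l : ℝ) := by
    rw [hX l hl]
    have h0 : (0 : ℝ) ≤ γ⁻¹ ^ l := by positivity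
    linarith
  have key : γ ^ (s * N) ≤ 2 * (r : ℝ) * (P : ℝ) ^ (s * N) := by
    calc γ ^ (s * N) ≤ γ ^ l := pow_le_pow_right₀ hγ1 hcon
      _ ≤ 2 * (X l : ℝ) := hXl
      _ ≤ 2 * ((r : ℝ) * (P : ℝ) ^ (s * N)) := by
          have h := hXub
          have h' : ((X l : ℤ) : ℝ) ≤ (((r : ℤ) * (P : ℤ) ^ (s * N) : ℤ) : ℝ) := by
            exact_mod_cast h
          push_cast at h'
          linarith
      _ = 2 * (r : ℝ) * (P : ℝ) ^ (s * N) := by ring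
  have hlow : (2.5 * (r : ℝ) * P) ^ (s * N) ≤ γ ^ (s * N) :=
    pow_le_pow_left₀ (by positivity) hγb _
  have hPpow : (0 : ℝ) < (P : ℝ) ^ (s * N) := by positivity
  have h1 : (2.5 * (r : ℝ)) ^ (s * N) ≤ 2 * r := by
    have h := le_trans hlow key
    rw [show (2.5 * (r : ℝ) * P) = (2.5 * r) * P by ring, mul_pow] at h
    exact le_of_mul_le_mul_right h hPpow
  -- but (2.5 r)^(sN) ≥ 2.5^8 * r > 2 r
  have h2 : (2.5 : ℝ) ^ 8 * r ≤ (2.5 * (r : ℝ)) ^ (s * N) := by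
    rw [mul_pow]
    have ha : (2.5 : ℝ) ^ 8 ≤ 2.5 ^ (s * N) := pow_le_pow_right₀ (by norm_num) hsN8
    have hb : (r : ℝ) ≤ (r : ℝ) ^ (s * N) := by
      calc (r : ℝ) = (r : ℝ) ^ 1 := (pow_one _).symm
        _ ≤ (r : ℝ) ^ (s * N) := pow_le_pow_right₀ hr1 (by omega)
    nlinarith
  nlinarith
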